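/- For real numbers a_1,...,a_n and x_1,...,x_n with x_1+...+x_n = 0 and n >= 2, the average over all permutations sigma of max_{1<=k<=n} | sum_{i=1}^k a_i x_{sigma(i)} |^2 is at most (80 + 4/205) (sum_{i=1}^n a_i^2)(sum_{i=1}^n x_i^2) / (n-1). -/

import Mathlib

/-!
Let `X_j` be the `j`-th draw, `S_k = X_0 + ⋯ + X_{k-1}` and `W_k = ∑_{j<k} b_j X_j`. Because the
draws are exchangeable and `∑ x = 0`, the mean `-S_k / (n - k)` of the values not yet drawn is the
conditional expectation of every later draw, so `D_j = X_j + S_j / (n - j)` is a martingale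
difference sequence with `E D_j² ≤ E X_j² = |x|² / n`; also `E W_k² ≤ |b|² |x|² / (n - 1)`.

For `k ≤ H ≤ (n + 1) / 2`, `W_k` is the Doob martingale `E[W_H | first k draws]` minus
`t_k · (-S_k / (n - k))`, where `t_k` is the weight still to come. By Abel summation this correction
is at most twice the running maximum of a second martingale transform, whose weights have square
sum at most `(2/3) |b|²` because `n - k ≥ n / 2`. Doob's `L²` maximal inequality, proved pathwise,
gives `E max_{k ≤ H} W_k² ≤ (88/3) |b|² |x|² / (n - 1)`. Running the sample backwards covers
`k > n / 2` via `W_k = W_n - (reversed partial sum)`, for a total constant `229/3 < 80 + 4/205`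
when `n ≥ 7`; for `n ≤ 81` the Cauchy–Schwarz bound `W_k² ≤ |a|² |x|²` already suffices.
-/

open MeasureTheory Finset

noncomputable section

instance permMS (n : ℕ) : MeasurableSpace (Equiv.Perm (Fin n)) := ⊤

instance permNE (n : ℕ) : Nonempty (Equiv.Perm (Fin n)) := ⟨1⟩

/-- uniform probability measure on the n! orderings: sampling without replacement. -/
def permMeasure (n : ℕ) : Measure (Equiv.Perm (Fin n)) :=
  (PMF.uniformOfFintype (Equiv.Perm (Fin n))).toMeasure

/-- `X n x i σ` : the `(i+1)`-st sample (0-based `i`) drawn without replacement. -/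
def X (n : ℕ) (x : Fin n → ℝ) (i : ℕ) (σ : Equiv.Perm (Fin n)) : ℝ :=
  if h : i < n then x (σ ⟨i, h⟩) else 0

/-- partial sum `S_k = X_1 + ⋯ + X_k`. -/
def S (n : ℕ) (x : Fin n → ℝ) (k : ℕ) (σ : Equiv.Perm (Fin n)) : ℝ :=
  ∑ i ∈ Finset.range k, X n x i σ

/-- partial sum of squares `T_k = X_1^2 + ⋯ + X_k^2`. -/
def T (n : ℕ) (x : Fin n → ℝ) (k : ℕ) (σ : Equiv.Perm (Fin n)) : ℝ :=
  ∑ i ∈ Finset.range k, (X n x i σ) ^ 2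

/-- `F_k = σ(X_1, ..., X_k)`. -/
def F (n : ℕ) (x : Fin n → ℝ) (k : ℕ) : MeasurableSpace (Equiv.Perm (Fin n)) :=
  MeasurableSpace.comap (fun σ => fun i : Fin k => X n x i σ) inferInstance

theorem two_mul_sum_partialSups_mul_sub_le (z : ℕ → ℝ) (H : ℕ) :
    2 * ∑ j ∈ range H, partialSups z j * (z (j + 1) - z j)
      ≤ 2 * partialSups z H * z H - partialSups z H ^ 2 - z 0 ^ 2 := by
  induction H with
  | zero => simp only [range_zero, sum_empty, partialSups_zero]; nlinarith
  | succ H ih =>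
    rw [sum_range_succ, partialSups_add_one]
    rcases le_total (partialSups z H) (z (H + 1)) with h | h
    · rw [sup_eq_right.mpr h]
      nlinarith [sq_nonneg (z (H + 1) - partialSups z H)]
    · rw [sup_eq_left.mpr h]
      nlinarith

theorem sq_partialSups_le (z : ℕ → ℝ) (H : ℕ) :
    partialSups z H ^ 2
      ≤ 4 * z H ^ 2 - 4 * ∑ j ∈ range H, partialSups z j * (z (j + 1) - z j) := by
  nlinarith [two_mul_sum_partialSups_mul_sub_le z H, sq_nonneg (2 * z H - partialSups z H),
    sq_nonneg (z 0)]

theorem sign_mul_sub_le_abs_sub_abs (z w : ℝ) : (SignType.sign z : ℝ) * (w - z) ≤ |w| - |z| := by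
  rw [mul_sub, sign_mul_self]
  rcases lt_trichotomy z 0 with h | h | h <;> simp [h] <;> linarith [le_abs_self w, neg_abs_le w]

section AbelSummation

variable {c q r : ℕ → ℝ} {H : ℕ}

theorem abs_sub_mul_le_partialSups (hc0 : ∀ k, 0 ≤ c k) (hc : Antitone c)
    (h0 : r 0 = c 0 * q 0) (hstep : ∀ k < H, r (k + 1) - r k = c (k + 1) * (q (k + 1) - q k)) :
    ∀ k ≤ H, |r k - c k * q k| ≤ partialSups (fun m => |r m|) k := by
  intro k hk
  induction k with
  | zero => simp only [h0, sub_self, abs_zero, partialSups_zero]; positivity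
  | succ k ih =>
    have hM : |r k| ≤ partialSups (fun m => |r m|) k := le_partialSups (fun m => |r m|) k
    have hB := ih (by omega)
    refine le_trans ?_ ((partialSups (fun m => |r m|)).monotone k.le_succ)
    rw [show r (k + 1) - c (k + 1) * q (k + 1) = r k - c (k + 1) * q k by
      linarith [hstep k (by omega)]]
    rcases (hc0 k).eq_or_lt with hck | hck
    · have : c (k + 1) = 0 := le_antisymm (hck ▸ hc k.le_succ) (hc0 _)
      simpa [this] using hM
    have hc1 : c (k + 1) ≤ c k := hc k.le_succ
    refine le_of_mul_le_mul_left ?_ hck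
    calc c k * |r k - c (k + 1) * q k| = |c k * (r k - c (k + 1) * q k)| := by
          rw [abs_mul, abs_of_pos hck]
      _ = |(c k - c (k + 1)) * r k + c (k + 1) * (r k - c k * q k)| := by
          congr 1
          ring
      _ ≤ (c k - c (k + 1)) * |r k| + c (k + 1) * |r k - c k * q k| := by
          refine (abs_add_le _ _).trans_eq ?_
          rw [abs_mul, abs_mul, abs_of_nonneg (sub_nonneg.mpr hc1), abs_of_nonneg (hc0 _)]
      _ ≤ (c k - c (k + 1)) * partialSups (fun m => |r m|) k
            + c (k + 1) * partialSups (fun m => |r m|) k := by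
          gcongr
          exact hc0 _
      _ = c k * partialSups (fun m => |r m|) k := by ring

theorem abs_mul_le_two_mul_partialSups (hc0 : ∀ k, 0 ≤ c k) (hc : Antitone c)
    (h0 : r 0 = c 0 * q 0) (hstep : ∀ k < H, r (k + 1) - r k = c (k + 1) * (q (k + 1) - q k))
    {k : ℕ} (hk : k ≤ H) : |c k * q k| ≤ 2 * partialSups (fun m => |r m|) k := by
  have h1 := abs_sub_mul_le_partialSups hc0 hc h0 hstep k hk
  have h2 : |r k| ≤ partialSups (fun m => |r m|) k := le_partialSups (fun m => |r m|) k
  calc |c k * q k| = |r k - (r k - c k * q k)| := by ring_nf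
    _ ≤ |r k| + |r k - c k * q k| := abs_sub _ _
    _ ≤ _ := by linarith

end AbelSummation

theorem sq_le_sq_partialSups_abs (f : ℕ → ℝ) {k H : ℕ} (hk : k ≤ H) :
    f k ^ 2 ≤ partialSups (fun m => |f m|) H ^ 2 := by
  rw [← sq_abs]
  exact pow_le_pow_left₀ (abs_nonneg _) (le_partialSups_of_le (fun m => |f m|) hk) 2

theorem sq_partialSups_abs_le {f : ℕ → ℝ} {H : ℕ} {B : ℝ} (h : ∀ k ≤ H, f k ^ 2 ≤ B) :
    partialSups (fun m => |f m|) H ^ 2 ≤ B := by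
  obtain ⟨k, hk, hmax⟩ := exists_partialSups_eq (fun m => |f m|) H
  rw [hmax, sq_abs]
  exact h k hk

section Exchangeability

open Equiv

variable {α : Type*} [Fintype α] [DecidableEq α]

def PermDependsOn (ψ : Perm α → ℝ) (s : Set α) : Prop :=
  ∀ σ τ : Perm α, (∀ i ∈ s, σ i = τ i) → ψ σ = ψ τ

theorem sum_apply_mul_eq_of_permDependsOn {ψ : Perm α → ℝ} {s : Set α}
    (hψ : PermDependsOn ψ s) (f : α → ℝ) {u v : α} (hu : u ∉ s) (hv : v ∉ s) :
    ∑ σ : Perm α, f (σ u) * ψ σ = ∑ σ : Perm α, f (σ v) * ψ σ := by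
  rw [← Equiv.sum_comp (Equiv.mulRight (swap u v))]
  refine sum_congr rfl fun σ _ => ?_
  have hfix : ∀ i ∈ s, (σ * swap u v) i = σ i := fun i hi => by
    rw [Perm.mul_apply, swap_apply_of_ne_of_ne (ne_of_mem_of_not_mem hi hu)
      (ne_of_mem_of_not_mem hi hv)]
  simp only [coe_mulRight, Perm.mul_apply, swap_apply_left, hψ _ _ hfix]

theorem card_mul_sum_apply_sq (x : α → ℝ) (u : α) :
    (Fintype.card α : ℝ) * ∑ σ : Perm α, x (σ u) ^ 2
      = (Fintype.card α).factorial * ∑ i, x i ^ 2 := by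
  have hconst : PermDependsOn (fun _ : Perm α => (1 : ℝ)) ∅ := fun _ _ _ => rfl
  calc (Fintype.card α : ℝ) * ∑ σ : Perm α, x (σ u) ^ 2
      = ∑ l : α, ∑ σ : Perm α, x (σ l) ^ 2 := by
        rw [← card_univ, ← nsmul_eq_mul, ← sum_const]
        refine sum_congr rfl fun l _ => ?_
        simpa using sum_apply_mul_eq_of_permDependsOn hconst (x · ^ 2)
          (Set.notMem_empty u) (Set.notMem_empty l)
    _ = ∑ _σ : Perm α, ∑ i, x i ^ 2 := by
        rw [sum_comm]
        exact sum_congr rfl fun σ _ => Equiv.sum_comp σ (x · ^ 2)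
    _ = (Fintype.card α).factorial * ∑ i, x i ^ 2 := by
        rw [sum_const, card_univ, Fintype.card_perm, nsmul_eq_mul]

theorem card_sub_one_mul_sum_apply_mul_apply (x : α → ℝ) (hx : ∑ i, x i = 0) {u v : α}
    (huv : u ≠ v) :
    ((Fintype.card α : ℝ) - 1) * ∑ σ : Perm α, x (σ u) * x (σ v)
      = -∑ σ : Perm α, x (σ v) ^ 2 := by
  have hdep : PermDependsOn (fun σ : Perm α => x (σ v)) {v} := fun σ τ h => by
    simp only [h v rfl]
  calc ((Fintype.card α : ℝ) - 1) * ∑ σ : Perm α, x (σ u) * x (σ v)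
      = ∑ l ∈ univ.erase v, ∑ σ : Perm α, x (σ l) * x (σ v) := by
        have hcard : ((univ.erase v).card : ℝ) = Fintype.card α - 1 := by
          rw [card_erase_of_mem (mem_univ v), card_univ,
            Nat.cast_pred (Fintype.card_pos_iff.mpr ⟨u⟩)]
        rw [← hcard, ← nsmul_eq_mul, ← sum_const]
        refine sum_congr rfl fun l hl => ?_
        exact sum_apply_mul_eq_of_permDependsOn hdep x huv (ne_of_mem_erase hl)
    _ = ∑ σ : Perm α, (∑ l ∈ univ.erase v, x (σ l)) * x (σ v) := by
        rw [sum_comm]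
        simp only [sum_mul]
    _ = -∑ σ : Perm α, x (σ v) ^ 2 := by
        rw [← sum_neg_distrib]
        refine sum_congr rfl fun σ _ => ?_
        have h := add_sum_erase univ (fun l => x (σ l)) (mem_univ v)
        rw [Equiv.sum_comp σ x, hx] at h
        rw [show ∑ l ∈ univ.erase v, x (σ l) = -x (σ v) by linarith]
        ring

end Exchangeability

namespace SamplingWithoutReplacement

open Equiv

variable {n : ℕ} (x : Fin n → ℝ)

/-- Since `∑ x = 0`, this is the mean of the `n - k` values not among the first `k` draws. -/
def remMean (n : ℕ) (x : Fin n → ℝ) (k : ℕ) (σ : Perm (Fin n)) : ℝ :=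
  -S n x k σ / ((n : ℝ) - k)

def mgDiff (n : ℕ) (x : Fin n → ℝ) (j : ℕ) (σ : Perm (Fin n)) : ℝ :=
  X n x j σ - remMean n x j σ

def mgTransform (n : ℕ) (x : Fin n → ℝ) (e : ℕ → ℝ) (k : ℕ) (σ : Perm (Fin n)) : ℝ :=
  ∑ j ∈ range k, e j * mgDiff n x j σ

def weightedSum (n : ℕ) (x : Fin n → ℝ) (b : ℕ → ℝ) (k : ℕ) (σ : Perm (Fin n)) : ℝ :=
  ∑ i ∈ range k, b i * X n x i σ

theorem X_of_lt {i : ℕ} (hi : i < n) (σ : Perm (Fin n)) : X n x i σ = x (σ ⟨i, hi⟩) :=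
  dif_pos hi

theorem sum_range_X (f : ℝ → ℝ) (σ : Perm (Fin n)) :
    ∑ i ∈ range n, f (X n x i σ) = ∑ i, f (x i) := by
  rw [sum_range (fun i => f (X n x i σ))]
  simp only [X_of_lt x (Fin.isLt _), Fin.eta]
  exact Equiv.sum_comp σ (f ∘ x)

theorem S_self {x : Fin n → ℝ} (hx : ∑ i, x i = 0) (σ : Perm (Fin n)) : S n x n σ = 0 := by
  simpa [S, hx] using sum_range_X x id σ

section Adapted

variable {m : ℕ}

theorem permDependsOn_X {i : ℕ} (hi : i < m) : PermDependsOn (X n x i) {i | (i : ℕ) < m} := by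
  intro σ τ h
  unfold X
  split_ifs with hin
  · rw [h _ hi]
  · rfl

theorem permDependsOn_S {k : ℕ} (hk : k ≤ m) : PermDependsOn (S n x k) {i | (i : ℕ) < m} :=
  fun σ τ h => sum_congr rfl fun i hi =>
    permDependsOn_X x (by rw [mem_range] at hi; omega) σ τ h

theorem permDependsOn_remMean {k : ℕ} (hk : k ≤ m) :
    PermDependsOn (remMean n x k) {i | (i : ℕ) < m} := fun σ τ h => by
  rw [remMean, remMean, permDependsOn_S x hk σ τ h]

theorem permDependsOn_mgDiff {j : ℕ} (hj : j < m) :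
    PermDependsOn (mgDiff n x j) {i | (i : ℕ) < m} := fun σ τ h => by
  rw [mgDiff, mgDiff, permDependsOn_X x hj σ τ h, permDependsOn_remMean x hj.le σ τ h]

theorem permDependsOn_mgTransform (e : ℕ → ℝ) {k : ℕ} (hk : k ≤ m) :
    PermDependsOn (mgTransform n x e k) {i | (i : ℕ) < m} := fun σ τ h =>
  sum_congr rfl fun j hj => by
    rw [permDependsOn_mgDiff x (by rw [mem_range] at hj; omega) σ τ h]

end Adapted

variable {x}

theorem sum_X_mul_eq_sum_remMean_mul (hx : ∑ i, x i = 0) {j : ℕ} (hj : j < n)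
    {ψ : Perm (Fin n) → ℝ} (hψ : PermDependsOn ψ {i | (i : ℕ) < j}) :
    ∑ σ, X n x j σ * ψ σ = ∑ σ, remMean n x j σ * ψ σ := by
  have hexch : ∀ l ∈ Ico j n, ∑ σ, X n x j σ * ψ σ = ∑ σ, X n x l σ * ψ σ := by
    intro l hl
    rw [mem_Ico] at hl
    simp only [X_of_lt x hj, X_of_lt x hl.2]
    exact sum_apply_mul_eq_of_permDependsOn hψ x (by simp) (by simpa using hl.1)
  have htail : ∀ σ, ∑ l ∈ Ico j n, X n x l σ = -S n x j σ := fun σ => by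
    rw [sum_Ico_eq_sub _ hj.le, ← S, ← S, S_self hx, zero_sub]
  have hnj : (n : ℝ) - j ≠ 0 := sub_ne_zero.mpr (by exact_mod_cast hj.ne')
  refine mul_left_cancel₀ hnj ?_
  calc ((n : ℝ) - j) * ∑ σ, X n x j σ * ψ σ
      = ∑ l ∈ Ico j n, ∑ σ, X n x l σ * ψ σ := by
        rw [← Nat.cast_sub hj.le, ← Nat.card_Ico, ← nsmul_eq_mul, ← sum_const]
        exact sum_congr rfl hexch
    _ = ∑ σ, -S n x j σ * ψ σ := by
        rw [sum_comm]
        simp only [← sum_mul, htail]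
    _ = ((n : ℝ) - j) * ∑ σ, remMean n x j σ * ψ σ := by
        rw [mul_sum]
        refine sum_congr rfl fun σ _ => ?_
        rw [remMean]
        field_simp

theorem sum_mgDiff_mul_eq_zero (hx : ∑ i, x i = 0) {j : ℕ} (hj : j < n)
    {ψ : Perm (Fin n) → ℝ} (hψ : PermDependsOn ψ {i | (i : ℕ) < j}) :
    ∑ σ, mgDiff n x j σ * ψ σ = 0 := by
  simp only [mgDiff, sub_mul, sum_sub_distrib, sum_X_mul_eq_sum_remMean_mul hx hj hψ, sub_self]

section Moments

variable (x)

theorem sum_X_sq {i : ℕ} (hi : i < n) :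
    ∑ σ, X n x i σ ^ 2 = n.factorial * (∑ i, x i ^ 2) / n := by
  have h := card_mul_sum_apply_sq x ⟨i, hi⟩
  rw [Fintype.card_fin] at h
  simp only [X_of_lt x hi]
  rw [eq_div_iff (Nat.cast_ne_zero.mpr (by omega)), mul_comm, h]

variable {x}

theorem sum_X_mul_X_of_ne (hx : ∑ i, x i = 0) {i j : ℕ} (hi : i < n) (hj : j < n) (hij : i ≠ j) :
    ∑ σ, X n x i σ * X n x j σ = -(n.factorial * (∑ i, x i ^ 2) / (n * (n - 1))) := by
  have h := card_sub_one_mul_sum_apply_mul_apply x hx (u := ⟨i, hi⟩) (v := ⟨j, hj⟩)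
    (by simpa using hij)
  rw [Fintype.card_fin] at h
  have hsq := sum_X_sq x hj
  simp only [X_of_lt x hi, X_of_lt x hj] at hsq ⊢
  have hn1 : (n : ℝ) - 1 ≠ 0 := sub_ne_zero.mpr (by norm_cast; omega)
  rw [hsq] at h
  field_simp
  linear_combination h

theorem sum_weightedSum_sq_le (hx : ∑ i, x i = 0) (hn : 2 ≤ n) (b : ℕ → ℝ) {k : ℕ}
    (hk : k ≤ n) :
    ∑ σ, weightedSum n x b k σ ^ 2
      ≤ n.factorial * (∑ i ∈ range k, b i ^ 2) * (∑ i, x i ^ 2) / (n - 1) := by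
  set m := ∑ i, x i ^ 2
  have hn0 : (n : ℝ) ≠ 0 := Nat.cast_ne_zero.mpr (by omega)
  have hn1 : (0 : ℝ) < n - 1 := sub_pos.mpr (by exact_mod_cast hn)
  set α : ℝ := n.factorial * m / (n - 1)
  set β : ℝ := n.factorial * m / (n * (n - 1))
  have hcov : ∀ i ∈ range k, ∀ j ∈ range k,
      ∑ σ, X n x i σ * X n x j σ = α * (if i = j then 1 else 0) - β := by
    intro i hi j hj
    rw [mem_range] at hi hj
    by_cases hij : i = j
    · subst hij
      simp only [← sq, sum_X_sq x (hi.trans_le hk), if_true, α, β]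
      field_simp
      ring
    · rw [sum_X_mul_X_of_ne hx (hi.trans_le hk) (hj.trans_le hk) hij, if_neg hij]
      ring
  calc ∑ σ, weightedSum n x b k σ ^ 2
      = ∑ i ∈ range k, ∑ j ∈ range k, b i * b j * ∑ σ, X n x i σ * X n x j σ := by
        simp only [weightedSum, sq]
        simp_rw [sum_mul_sum, mul_sum]
        rw [sum_comm]
        refine sum_congr rfl fun i _ => ?_
        rw [sum_comm]
        exact sum_congr rfl fun j _ => sum_congr rfl fun σ _ => by ring
    _ = α * ∑ i ∈ range k, b i ^ 2 - β * (∑ i ∈ range k, b i) ^ 2 := by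
        rw [sq, sum_mul_sum, mul_sum, mul_sum, ← sum_sub_distrib]
        refine sum_congr rfl fun i hi => ?_
        rw [sum_congr rfl fun j hj => by rw [hcov i hi j hj]]
        simp only [mul_sub, mul_ite, mul_one, mul_zero, sum_sub_distrib, sum_ite_eq, if_pos hi,
          ← sum_mul]
        ring
    _ ≤ α * ∑ i ∈ range k, b i ^ 2 := sub_le_self _ (by positivity)
    _ = _ := by ring

end Moments

section Martingale

theorem sum_mgDiff_sq_le (hx : ∑ i, x i = 0) {j : ℕ} (hj : j < n) :
    ∑ σ, mgDiff n x j σ ^ 2 ≤ n.factorial * (∑ i, x i ^ 2) / n := by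
  have horth := sum_mgDiff_mul_eq_zero hx hj (permDependsOn_remMean x le_rfl)
  have hpyth : ∑ σ, X n x j σ ^ 2 = ∑ σ, mgDiff n x j σ ^ 2
      + 2 * ∑ σ, mgDiff n x j σ * remMean n x j σ + ∑ σ, remMean n x j σ ^ 2 := by
    rw [mul_sum, ← sum_add_distrib, ← sum_add_distrib]
    exact sum_congr rfl fun σ _ => by rw [mgDiff]; ring
  rw [← sum_X_sq x hj, hpyth, horth]
  linarith [sum_nonneg fun σ (_ : σ ∈ univ) => sq_nonneg (remMean n x j σ)]

theorem mgTransform_succ (e : ℕ → ℝ) (k : ℕ) (σ : Perm (Fin n)) :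
    mgTransform n x e (k + 1) σ = mgTransform n x e k σ + e k * mgDiff n x k σ :=
  sum_range_succ _ _

theorem sum_mgTransform_sq_le (hx : ∑ i, x i = 0) (e : ℕ → ℝ) {k : ℕ} (hk : k ≤ n) :
    ∑ σ, mgTransform n x e k σ ^ 2
      ≤ (∑ j ∈ range k, e j ^ 2) * (n.factorial * (∑ i, x i ^ 2) / n) := by
  induction k with
  | zero => simp [mgTransform]
  | succ k ih =>
    have horth := sum_mgDiff_mul_eq_zero hx hk (permDependsOn_mgTransform x e le_rfl)
    have hexpand : ∑ σ, mgTransform n x e (k + 1) σ ^ 2 = ∑ σ, mgTransform n x e k σ ^ 2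
        + 2 * e k * ∑ σ, mgDiff n x k σ * mgTransform n x e k σ
        + e k ^ 2 * ∑ σ, mgDiff n x k σ ^ 2 := by
      simp only [mul_sum, ← sum_add_distrib]
      exact sum_congr rfl fun σ _ => by rw [mgTransform_succ]; ring
    rw [hexpand, horth, sum_range_succ, add_mul]
    nlinarith [ih (by omega), sum_mgDiff_sq_le hx hk, sq_nonneg (e k)]

theorem sum_sq_partialSups_abs_mgTransform_le (hx : ∑ i, x i = 0) (e : ℕ → ℝ) {H : ℕ}
    (hH : H ≤ n) :
    ∑ σ, partialSups (fun k => |mgTransform n x e k σ|) H ^ 2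
      ≤ 4 * ∑ σ, mgTransform n x e H σ ^ 2 := by
  set M := fun σ => partialSups (fun k => |mgTransform n x e k σ|)
  have hM0 : ∀ σ j, 0 ≤ M σ j := fun σ j =>
    (abs_nonneg _).trans (le_partialSups (fun k => |mgTransform n x e k σ|) j)
  -- the running maximum times the sign of the current value is a predictable weight
  have hcross : ∀ j < H,
      0 ≤ ∑ σ, M σ j * (|mgTransform n x e (j + 1) σ| - |mgTransform n x e j σ|) := by
    intro j hj
    have hψ : PermDependsOn (fun σ => M σ j * SignType.sign (mgTransform n x e j σ))
        {i | (i : ℕ) < j} := fun σ τ h => by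
      have hZ : ∀ k ≤ j, mgTransform n x e k σ = mgTransform n x e k τ :=
        fun k hk => permDependsOn_mgTransform x e hk σ τ h
      simp only [M, partialSups_apply, hZ j le_rfl]
      congr 1
      exact sup'_congr _ rfl fun k hk => by rw [hZ k (mem_Iic.mp hk)]
    calc (0 : ℝ) = e j * ∑ σ, mgDiff n x j σ * (M σ j * SignType.sign (mgTransform n x e j σ)) := by
          rw [sum_mgDiff_mul_eq_zero hx (by omega) hψ, mul_zero]
      _ = ∑ σ, M σ j * (SignType.sign (mgTransform n x e j σ)
            * (mgTransform n x e (j + 1) σ - mgTransform n x e j σ)) := by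
          rw [mul_sum]
          exact sum_congr rfl fun σ _ => by rw [mgTransform_succ]; ring
      _ ≤ _ := sum_le_sum fun σ _ =>
          mul_le_mul_of_nonneg_left (sign_mul_sub_le_abs_sub_abs _ _) (hM0 σ j)
  calc ∑ σ, M σ H ^ 2
      ≤ ∑ σ, (4 * mgTransform n x e H σ ^ 2 - 4 * ∑ j ∈ range H,
          M σ j * (|mgTransform n x e (j + 1) σ| - |mgTransform n x e j σ|)) :=
        sum_le_sum fun σ _ => by
          simpa only [sq_abs] using sq_partialSups_le (fun k => |mgTransform n x e k σ|) H
    _ = 4 * ∑ σ, mgTransform n x e H σ ^ 2 - 4 * ∑ j ∈ range H, ∑ σ,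
          M σ j * (|mgTransform n x e (j + 1) σ| - |mgTransform n x e j σ|) := by
        rw [sum_sub_distrib, ← mul_sum, ← mul_sum, sum_comm]
    _ ≤ 4 * ∑ σ, mgTransform n x e H σ ^ 2 := by
        linarith [sum_nonneg fun j hj => hcross j (mem_range.mp hj)]

end Martingale

section HalfRange

def tailSum (b : ℕ → ℝ) (H k : ℕ) : ℝ :=
  ∑ i ∈ Ico k H, b i

def remMeanWeight (n : ℕ) (c : ℕ → ℝ) (j : ℕ) : ℝ :=
  -(c (j + 1) / ((n : ℝ) - (j + 1)))

theorem remMean_zero (σ : Perm (Fin n)) : remMean n x 0 σ = 0 := by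
  simp [remMean, S]

theorem remMean_succ {k : ℕ} (hk : k + 1 < n) (σ : Perm (Fin n)) :
    remMean n x (k + 1) σ = remMean n x k σ - mgDiff n x k σ / ((n : ℝ) - (k + 1)) := by
  have h1 : (n : ℝ) - k ≠ 0 := sub_ne_zero.mpr (by norm_cast; omega)
  have h2 : (n : ℝ) - (k + 1) ≠ 0 := sub_ne_zero.mpr (by norm_cast; omega)
  simp only [mgDiff, remMean, S, sum_range_succ, Nat.cast_add, Nat.cast_one]
  field_simp
  ring

theorem mgTransform_remMeanWeight_succ_sub (c : ℕ → ℝ) {k : ℕ} (hk : k + 1 < n)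
    (σ : Perm (Fin n)) :
    mgTransform n x (remMeanWeight n c) (k + 1) σ - mgTransform n x (remMeanWeight n c) k σ
      = c (k + 1) * (remMean n x (k + 1) σ - remMean n x k σ) := by
  rw [mgTransform_succ, remMean_succ hk, remMeanWeight]
  ring

def doobWeight (n : ℕ) (b : ℕ → ℝ) (H j : ℕ) : ℝ :=
  b j + remMeanWeight n (tailSum b H) j

/-- The right-hand side is the conditional expectation of `weightedSum n x b H` given the first
`k` draws. -/
theorem weightedSum_add_tailSum_mul_remMean (b : ℕ → ℝ) {H k : ℕ} (hH : H < n) (hk : k ≤ H)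
    (σ : Perm (Fin n)) :
    weightedSum n x b k σ + tailSum b H k * remMean n x k σ
      = mgTransform n x (doobWeight n b H) k σ := by
  induction k with
  | zero => simp [weightedSum, mgTransform, remMean_zero]
  | succ k ih =>
    have htail : tailSum b H k = b k + tailSum b H (k + 1) :=
      sum_eq_sum_Ico_succ_bot (by omega) b
    rw [mgTransform_succ, ← ih (by omega), weightedSum, sum_range_succ, ← weightedSum,
      remMean_succ (by omega), htail, mgDiff, doobWeight, remMeanWeight]
    ring

theorem sum_remMeanWeight_tailSum_abs_sq_le (b : ℕ → ℝ) {H : ℕ} (hH : 2 * H ≤ n + 1)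
    (hn : 7 ≤ n) :
    ∑ j ∈ range H, remMeanWeight n (tailSum (fun i => |b i|) H) j ^ 2
      ≤ 2 / 3 * ∑ i ∈ range H, b i ^ 2 := by
  set W := ∑ i ∈ range H, b i ^ 2
  have hnH : (0 : ℝ) < n - H := sub_pos.mpr (by norm_cast; omega)
  have hterm : ∀ j ∈ range H,
      remMeanWeight n (tailSum (fun i => |b i|) H) j ^ 2 ≤ W / (2 * (n - H)) := by
    intro j hj
    rw [mem_range] at hj
    set d : ℝ := n - (j + 1)
    have hd : (n : ℝ) - H ≤ d := by
      simp only [d]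
      linarith [(by exact_mod_cast hj : (j : ℝ) + 1 ≤ H)]
    have hcs : tailSum (fun i => |b i|) H (j + 1) ^ 2 ≤ d * W / 2 := by
      have h2 : 2 * ((H : ℝ) - (j + 1)) ≤ d := by
        have : 2 * (H : ℝ) ≤ n + 1 := by exact_mod_cast hH
        simp only [d]
        linarith [(j.cast_nonneg : (0 : ℝ) ≤ j)]
      have hsub : ∑ i ∈ Ico (j + 1) H, b i ^ 2 ≤ W :=
        sum_le_sum_of_subset_of_nonneg (fun i hi => by simp at hi ⊢; omega)
          fun i _ _ => sq_nonneg _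
      calc tailSum (fun i => |b i|) H (j + 1) ^ 2
          ≤ ((H : ℝ) - (j + 1)) * ∑ i ∈ Ico (j + 1) H, b i ^ 2 := by
            refine (sq_sum_le_card_mul_sum_sq ..).trans_eq ?_
            rw [Nat.card_Ico, Nat.cast_sub (by omega)]
            simp
        _ ≤ d * W / 2 := by nlinarith [sum_nonneg fun i (_ : i ∈ Ico (j + 1) H) => sq_nonneg (b i)]
    rw [remMeanWeight, neg_sq, div_pow,
      div_le_div_iff₀ (pow_pos (hnH.trans_le hd) 2) (by positivity)]
    nlinarith [sum_nonneg fun i (_ : i ∈ range H) => sq_nonneg (b i)]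
  calc ∑ j ∈ range H, remMeanWeight n (tailSum (fun i => |b i|) H) j ^ 2
      ≤ H * (W / (2 * (n - H))) := by
        simpa using sum_le_sum hterm
    _ ≤ 2 / 3 * W := by
        rw [mul_div_assoc', div_le_iff₀ (by positivity)]
        have : 7 * (H : ℝ) ≤ 4 * n := by norm_cast; omega
        nlinarith [sum_nonneg fun i (_ : i ∈ range H) => sq_nonneg (b i)]

theorem sq_partialSups_abs_weightedSum_le_mgTransform (b : ℕ → ℝ) {H : ℕ} (hH : H < n)
    (σ : Perm (Fin n)) :
    partialSups (fun k => |weightedSum n x b k σ|) H ^ 2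
      ≤ 2 * partialSups (fun k => |mgTransform n x (doobWeight n b H) k σ|) H ^ 2
        + 8 * partialSups (fun k =>
          |mgTransform n x (remMeanWeight n (tailSum (fun i => |b i|) H)) k σ|) H ^ 2 := by
  set c := tailSum (fun i => |b i|) H
  have hc0 : ∀ k, 0 ≤ c k := fun k => sum_nonneg fun i _ => abs_nonneg (b i)
  have hc : Antitone c := fun k l hkl =>
    sum_le_sum_of_subset_of_nonneg (Ico_subset_Ico hkl le_rfl) fun i _ _ => abs_nonneg (b i)
  have hR : ∀ k ≤ H, |c k * remMean n x k σ|
      ≤ 2 * partialSups (fun k => |mgTransform n x (remMeanWeight n c) k σ|) H := by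
    intro k hk
    refine (abs_mul_le_two_mul_partialSups (q := fun k => remMean n x k σ)
      (r := fun k => mgTransform n x (remMeanWeight n c) k σ) hc0 hc
      (by simp [mgTransform, remMean_zero])
      (fun k hk => mgTransform_remMeanWeight_succ_sub c (by omega) σ) hk).trans ?_
    gcongr
  refine sq_partialSups_abs_le fun k hk => ?_
  have hdecomp := weightedSum_add_tailSum_mul_remMean (x := x) b hH hk σ
  have hM := sq_le_sq_partialSups_abs (fun k => mgTransform n x (doobWeight n b H) k σ) hk
  have ht : (tailSum b H k * remMean n x k σ) ^ 2 ≤ (c k * remMean n x k σ) ^ 2 := by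
    rw [mul_pow, mul_pow]
    refine mul_le_mul_of_nonneg_right (sq_le_sq' ?_ ?_) (sq_nonneg _)
    exacts [neg_le_of_abs_le (abs_sum_le_sum_abs _ _),
      (le_abs_self _).trans (abs_sum_le_sum_abs _ _)]
  have hc : (c k * remMean n x k σ) ^ 2
      ≤ (2 * partialSups (fun k => |mgTransform n x (remMeanWeight n c) k σ|) H) ^ 2 := by
    rw [← sq_abs]
    exact pow_le_pow_left₀ (abs_nonneg _) (hR k hk) 2
  rw [eq_sub_of_add_eq hdecomp]
  nlinarith [sq_nonneg (mgTransform n x (doobWeight n b H) k σ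
    + tailSum b H k * remMean n x k σ)]

theorem sum_sq_partialSups_abs_weightedSum_le_of_two_mul_le (hx : ∑ i, x i = 0) (hn : 7 ≤ n)
    (b : ℕ → ℝ) {H : ℕ} (hH : 2 * H ≤ n + 1) :
    ∑ σ, partialSups (fun k => |weightedSum n x b k σ|) H ^ 2
      ≤ 88 / 3 * (n.factorial * (∑ i ∈ range n, b i ^ 2) * (∑ i, x i ^ 2) / (n - 1)) := by
  have hHn : H < n := by omega
  have hn1 : (0 : ℝ) < n - 1 := sub_pos.mpr (by norm_cast; omega)
  have hWH : ∑ i ∈ range H, b i ^ 2 ≤ ∑ i ∈ range n, b i ^ 2 :=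
    sum_le_sum_of_subset_of_nonneg (range_subset_range.mpr hHn.le) fun i _ _ => sq_nonneg _
  have hM : ∑ σ, mgTransform n x (doobWeight n b H) H σ ^ 2
      ≤ n.factorial * (∑ i ∈ range n, b i ^ 2) * (∑ i, x i ^ 2) / (n - 1) := by
    have hend : ∀ σ, mgTransform n x (doobWeight n b H) H σ = weightedSum n x b H σ := fun σ => by
      simp [← weightedSum_add_tailSum_mul_remMean b hHn le_rfl σ, tailSum]
    simp only [hend]
    refine (sum_weightedSum_sq_le hx (by omega) b hHn.le).trans ?_
    gcongr
  have hR : ∑ σ, mgTransform n x (remMeanWeight n (tailSum (fun i => |b i|) H)) H σ ^ 2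
      ≤ 2 / 3 * (n.factorial * (∑ i ∈ range n, b i ^ 2) * (∑ i, x i ^ 2) / (n - 1)) := by
    refine (sum_mgTransform_sq_le hx _ hHn.le).trans ?_
    have hweight := sum_remMeanWeight_tailSum_abs_sq_le b hH hn
    have hdiv : n.factorial * (∑ i, x i ^ 2) / n ≤ n.factorial * (∑ i, x i ^ 2) / (n - 1) :=
      div_le_div_of_nonneg_left (by positivity) hn1 (by linarith)
    calc (∑ j ∈ range H, remMeanWeight n (tailSum (fun i => |b i|) H) j ^ 2)
          * (n.factorial * (∑ i, x i ^ 2) / n)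
        ≤ (2 / 3 * ∑ i ∈ range n, b i ^ 2) * (n.factorial * (∑ i, x i ^ 2) / (n - 1)) := by
          gcongr
          linarith
      _ = _ := by ring
  calc ∑ σ, partialSups (fun k => |weightedSum n x b k σ|) H ^ 2
      ≤ ∑ σ, (2 * partialSups (fun k => |mgTransform n x (doobWeight n b H) k σ|) H ^ 2
          + 8 * partialSups (fun k =>
            |mgTransform n x (remMeanWeight n (tailSum (fun i => |b i|) H)) k σ|) H ^ 2) :=
        sum_le_sum fun σ _ => sq_partialSups_abs_weightedSum_le_mgTransform b hHn σ
    _ ≤ 2 * (4 * ∑ σ, mgTransform n x (doobWeight n b H) H σ ^ 2)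
          + 8 * (4 * ∑ σ,
            mgTransform n x (remMeanWeight n (tailSum (fun i => |b i|) H)) H σ ^ 2) := by
        rw [sum_add_distrib, ← mul_sum, ← mul_sum]
        gcongr <;> exact sum_sq_partialSups_abs_mgTransform_le hx _ hHn.le
    _ ≤ _ := by linarith

end HalfRange

section FullRange

theorem X_mul_revPerm {i : ℕ} (hi : i < n) (σ : Perm (Fin n)) :
    X n x i (σ * Fin.revPerm) = X n x (n - 1 - i) σ := by
  rw [X_of_lt x hi, X_of_lt x (by omega), Perm.mul_apply, Fin.revPerm_apply]
  congr 2
  ext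
  simp only [Fin.val_rev]
  omega

theorem weightedSum_sub_weightedSum (b : ℕ → ℝ) {k : ℕ} (hk : k ≤ n) (σ : Perm (Fin n)) :
    weightedSum n x b n σ - weightedSum n x b k σ
      = weightedSum n x (fun j => b (n - 1 - j)) (n - k) (σ * Fin.revPerm) := by
  have hrev : ∀ j ∈ range (n - k),
      b (n - 1 - j) * X n x j (σ * Fin.revPerm) = b (n - 1 - j) * X n x (n - 1 - j) σ :=
    fun j hj => by rw [X_mul_revPerm (by simp at hj; omega)]
  rw [weightedSum, weightedSum, ← sum_Ico_eq_sub _ hk, weightedSum, sum_congr rfl hrev]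
  obtain rfl | hn := Nat.eq_zero_or_pos n
  · simp [Nat.le_zero.mp hk]
  rw [← Nat.Ico_zero_eq_range, sum_Ico_reflect (fun i => b i * X n x i σ) 0 (by omega)]
  rw [show n - 1 + 1 - (n - k) = k by omega, show n - 1 + 1 - 0 = n by omega]

theorem sq_partialSups_abs_weightedSum_le_sum_sq_mul (b : ℕ → ℝ) (σ : Perm (Fin n)) :
    partialSups (fun k => |weightedSum n x b k σ|) n ^ 2
      ≤ (∑ i ∈ range n, b i ^ 2) * ∑ i, x i ^ 2 := by
  refine sq_partialSups_abs_le fun k hk => ?_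
  have hsub : range k ⊆ range n := range_subset_range.mpr hk
  calc weightedSum n x b k σ ^ 2
      ≤ (∑ i ∈ range k, b i ^ 2) * ∑ i ∈ range k, X n x i σ ^ 2 :=
        sum_mul_sq_le_sq_mul_sq _ _ _
    _ ≤ (∑ i ∈ range n, b i ^ 2) * ∑ i ∈ range n, X n x i σ ^ 2 := by
        gcongr
    _ = (∑ i ∈ range n, b i ^ 2) * ∑ i, x i ^ 2 := by rw [sum_range_X x (· ^ 2)]

theorem sum_sq_partialSups_abs_weightedSum_le_of_seven_le (hx : ∑ i, x i = 0) (hn : 7 ≤ n)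
    (b : ℕ → ℝ) :
    ∑ σ, partialSups (fun k => |weightedSum n x b k σ|) n ^ 2
      ≤ 229 / 3 * (n.factorial * (∑ i ∈ range n, b i ^ 2) * (∑ i, x i ^ 2) / (n - 1)) := by
  set K := n.factorial * (∑ i ∈ range n, b i ^ 2) * (∑ i, x i ^ 2) / (n - 1)
  set b' : ℕ → ℝ := fun j => b (n - 1 - j)
  set h := n / 2
  set h' := n - h - 1
  have hpoint : ∀ σ : Perm (Fin n), partialSups (fun k => |weightedSum n x b k σ|) n ^ 2
      ≤ partialSups (fun k => |weightedSum n x b k σ|) h ^ 2 + 3 * weightedSum n x b n σ ^ 2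
        + 3 / 2 * partialSups (fun k => |weightedSum n x b' k (σ * Fin.revPerm)|) h' ^ 2 := by
    intro σ
    have hL0 := sq_nonneg (partialSups (fun k => |weightedSum n x b k σ|) h)
    have hU0 := sq_nonneg (partialSups (fun k => |weightedSum n x b' k (σ * Fin.revPerm)|) h')
    refine sq_partialSups_abs_le fun k hk => ?_
    rcases le_or_gt k h with hkh | hkh
    · nlinarith [sq_le_sq_partialSups_abs (fun k => weightedSum n x b k σ) hkh,
        sq_nonneg (weightedSum n x b n σ)]
    · have hU' := sq_le_sq_partialSups_abs (fun k => weightedSum n x b' k (σ * Fin.revPerm))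
        (show n - k ≤ h' by omega)
      have hsplit : weightedSum n x b k σ
          = weightedSum n x b n σ - weightedSum n x b' (n - k) (σ * Fin.revPerm) := by
        linarith [weightedSum_sub_weightedSum (x := x) b hk σ]
      rw [hsplit]
      nlinarith [sq_nonneg (2 * weightedSum n x b n σ
        + weightedSum n x b' (n - k) (σ * Fin.revPerm))]
  have hrev : ∑ σ : Perm (Fin n),
      partialSups (fun k => |weightedSum n x b' k (σ * Fin.revPerm)|) h' ^ 2
      = ∑ σ : Perm (Fin n), partialSups (fun k => |weightedSum n x b' k σ|) h' ^ 2 :=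
    Equiv.sum_comp (Equiv.mulRight Fin.revPerm)
      fun σ => partialSups (fun k => |weightedSum n x b' k σ|) h' ^ 2
  have hb' : ∑ i ∈ range n, b' i ^ 2 = ∑ i ∈ range n, b i ^ 2 :=
    sum_range_reflect (fun i => b i ^ 2) n
  have hL := sum_sq_partialSups_abs_weightedSum_le_of_two_mul_le hx hn b
    (show 2 * h ≤ n + 1 by omega)
  have hU := sum_sq_partialSups_abs_weightedSum_le_of_two_mul_le hx hn b'
    (show 2 * h' ≤ n + 1 by omega)
  have hS := sum_weightedSum_sq_le hx (by omega) b le_rfl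
  rw [hb'] at hU
  calc ∑ σ, partialSups (fun k => |weightedSum n x b k σ|) n ^ 2
      ≤ ∑ σ, (partialSups (fun k => |weightedSum n x b k σ|) h ^ 2
          + 3 * weightedSum n x b n σ ^ 2
          + 3 / 2 * partialSups (fun k => |weightedSum n x b' k (σ * Fin.revPerm)|) h' ^ 2) :=
        sum_le_sum fun σ _ => hpoint σ
    _ ≤ 88 / 3 * K + 3 * K + 3 / 2 * (88 / 3 * K) := by
        rw [sum_add_distrib, sum_add_distrib, ← mul_sum, ← mul_sum, hrev]
        gcongr
    _ = 229 / 3 * K := by ring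

end FullRange

section Coefficients

def zeroExtend (a : Fin n → ℝ) (i : ℕ) : ℝ :=
  if h : i < n then a ⟨i, h⟩ else 0

theorem sum_range_zeroExtend_sq (a : Fin n → ℝ) :
    ∑ i ∈ range n, zeroExtend a i ^ 2 = ∑ i, a i ^ 2 := by
  rw [sum_range fun i => zeroExtend a i ^ 2]
  simp [zeroExtend]

theorem sum_filter_lt_eq_weightedSum (a : Fin n → ℝ) {k : ℕ} (hk : k ≤ n) (σ : Perm (Fin n)) :
    ∑ i ∈ univ.filter fun i : Fin n => (i : ℕ) < k, a i * x (σ i)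
      = weightedSum n x (zeroExtend a) k σ := by
  have hrange : (range n).filter (· < k) = range k := by
    ext i
    simp only [mem_filter, mem_range]
    omega
  rw [weightedSum, ← hrange, sum_filter, sum_filter,
    sum_range fun i => if i < k then zeroExtend a i * X n x i σ else 0]
  refine sum_congr rfl fun i _ => ?_
  simp [zeroExtend, X_of_lt x i.isLt]

end Coefficients

theorem sum_sq_partialSups_abs_weightedSum_le (hx : ∑ i, x i = 0) (hn : 2 ≤ n) (b : ℕ → ℝ) :
    ∑ σ, partialSups (fun k => |weightedSum n x b k σ|) n ^ 2
      ≤ n.factorial * ((80 + 4 / 205) * (∑ i ∈ range n, b i ^ 2) * (∑ i, x i ^ 2) / (n - 1)) := by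
  have hn1 : (0 : ℝ) < n - 1 := sub_pos.mpr (by exact_mod_cast hn)
  have hK : 0 ≤ (∑ i ∈ range n, b i ^ 2) * ∑ i, x i ^ 2 := by positivity
  rcases le_or_gt n 81 with hsmall | hlarge
  · calc ∑ σ, partialSups (fun k => |weightedSum n x b k σ|) n ^ 2
        ≤ ∑ _σ : Perm (Fin n), (∑ i ∈ range n, b i ^ 2) * ∑ i, x i ^ 2 :=
          sum_le_sum fun σ _ => sq_partialSups_abs_weightedSum_le_sum_sq_mul b σ
      _ = n.factorial * ((∑ i ∈ range n, b i ^ 2) * ∑ i, x i ^ 2) := by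
          simp [Fintype.card_perm]
      _ ≤ _ := by
          gcongr
          rw [le_div_iff₀ hn1]
          have : (n : ℝ) ≤ 81 := by exact_mod_cast hsmall
          nlinarith
  · refine (sum_sq_partialSups_abs_weightedSum_le_of_seven_le hx (by omega) b).trans ?_
    rw [show (n.factorial : ℝ) * ((80 + 4 / 205) * (∑ i ∈ range n, b i ^ 2) * (∑ i, x i ^ 2)
        / (n - 1)) = (80 + 4 / 205) * (n.factorial * (∑ i ∈ range n, b i ^ 2) * (∑ i, x i ^ 2)
        / (n - 1)) by ring]
    gcongr
    norm_num

end SamplingWithoutReplacement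

theorem statement19 (n : ℕ) (hn : 2 ≤ n) (a x : Fin n → ℝ) (hx : ∑ i, x i = 0) :
    (1 / (Nat.factorial n : ℝ)) * ∑ σ : Equiv.Perm (Fin n),
        (Finset.Icc 1 n).sup' (Finset.nonempty_Icc.mpr (by omega))
          (fun k =>
            |∑ i ∈ Finset.univ.filter fun i : Fin n => (i : ℕ) < k, a i * x (σ i)| ^ 2)
      ≤ (80 + 4 / 205) * (∑ i, (a i) ^ 2) * (∑ i, (x i) ^ 2) / ((n : ℝ) - 1) := by
  open SamplingWithoutReplacement in
  have hsum : ∑ σ : Equiv.Perm (Fin n), (Icc 1 n).sup' (nonempty_Icc.mpr (by omega)) (fun k =>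
        |∑ i ∈ univ.filter fun i : Fin n => (i : ℕ) < k, a i * x (σ i)| ^ 2)
      ≤ n.factorial * ((80 + 4 / 205) * (∑ i, a i ^ 2) * (∑ i, x i ^ 2) / (n - 1)) := by
    rw [← sum_range_zeroExtend_sq a]
    refine (sum_le_sum fun σ _ => sup'_le _ _ fun k hk => ?_).trans
      (sum_sq_partialSups_abs_weightedSum_le hx hn (zeroExtend a))
    rw [sq_abs, sum_filter_lt_eq_weightedSum a (mem_Icc.mp hk).2]
    exact sq_le_sq_partialSups_abs (fun k => weightedSum n x (zeroExtend a) k σ) (mem_Icc.mp hk).2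
  calc _ ≤ 1 / (n.factorial : ℝ) * (n.factorial
        * ((80 + 4 / 205) * (∑ i, a i ^ 2) * (∑ i, x i ^ 2) / (n - 1))) := by
        gcongr
    _ = _ := by field_simp
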